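/- Let (a,b,c) ∈ ℝ³ with a²+b²+c² ≠ 0. On 𝔥(2,1)_{a,b,c}, the torsion 3-form T = η∧dη satisfies dT = −2(a²+b²+c²) e¹∧e²∧e³∧e⁴. Moreover, if (λ,μ,τ) ≠ (0,0,0) satisfies λ²+μ²+τ² < a²+b²+c², then with α' = 2(a²+b²+c²−λ²−μ²−τ²)^{−1} > 0 one has the anomaly cancellation identity dT = 2π² α' ( p₁(∇⁺) − p₁(A_{λ,μ,τ}) ). -/

import Mathlib

noncomputable section
open Real

/-- ℝ⁵, the underlying space of the Lie algebra 𝔥(2,1)_{a,b,c}. -/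
abbrev V : Type := Fin 5 → ℝ

/-- The standard (orthonormal) basis vectors E₁,…,E₅ (0-indexed). -/
def E (i : Fin 5) : V := Pi.single i 1

/-- The inner product making E₁,…,E₅ orthonormal. -/
def ip (x y : V) : ℝ := ∑ i, x i * y i

/-- The dual basis 1-forms e¹,…,e⁵ (0-indexed). -/
def e (i : Fin 5) : V → ℝ := fun x => x i

/-- The Lie bracket of 𝔥(2,1)_{a,b,c}: the only nonzero brackets of basis vectors are
[E₁,E₂] = −aE₅, [E₃,E₄] = aE₅, [E₁,E₃] = −bE₅, [E₂,E₄] = −bE₅, [E₁,E₄] = −cE₅,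
[E₂,E₃] = cE₅. -/
def br (a b c : ℝ) (x y : V) : V := fun k =>
  if k = 4 then
    -a * (x 0 * y 1 - x 1 * y 0) + a * (x 2 * y 3 - x 3 * y 2)
      - b * (x 0 * y 2 - x 2 * y 0) - b * (x 1 * y 3 - x 3 * y 1)
      - c * (x 0 * y 3 - x 3 * y 0) + c * (x 1 * y 2 - x 2 * y 1)
  else 0

/-- Chevalley–Eilenberg differential of a 1-form: dα(X,Y) = −α([X,Y]). -/
def d1 (a b c : ℝ) (α : V → ℝ) : V → V → ℝ := fun x y => -α (br a b c x y)

/-- dη = de⁵, the Chevalley–Eilenberg differential of η = e⁵. -/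
def dEta (a b c : ℝ) : V → V → ℝ := d1 a b c (e 4)

/-- Wedge product of two 1-forms. -/
def w11 (α β : V → ℝ) : V → V → ℝ := fun x y => α x * β y - α y * β x

/-- Wedge product of a 1-form and a 2-form. -/
def w12 (α : V → ℝ) (β : V → V → ℝ) : V → V → V → ℝ :=
  fun x y z => α x * β y z - α y * β x z + α z * β x y

/-- Wedge product of two 2-forms. -/
def w22 (α β : V → V → ℝ) : V → V → V → V → ℝ := fun x y z w =>
  α x y * β z w - α x z * β y w + α x w * β y z
    + α y z * β x w - α y w * β x z + α z w * β x y

/-- The 4-form e¹∧e²∧e³∧e⁴. -/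
def e1234 : V → V → V → V → ℝ := w22 (w11 (e 0) (e 1)) (w11 (e 2) (e 3))

/-- The torsion 3-form T = η∧dη. -/
def T3 (a b c : ℝ) : V → V → V → ℝ := w12 (e 4) (dEta a b c)

/-- Chevalley–Eilenberg differential of a 3-form. -/
def d3 (a b c : ℝ) (T : V → V → V → ℝ) : V → V → V → V → ℝ := fun x y z w =>
  -T (br a b c x y) z w + T (br a b c x z) y w - T (br a b c x w) y z
    - T (br a b c y z) x w + T (br a b c y w) x z - T (br a b c z w) x y

/-- The Levi-Civita (Koszul) connection of the left-invariant metric: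
2⟨∇_X Y, Z⟩ = ⟨[X,Y],Z⟩ − ⟨[Y,Z],X⟩ + ⟨[Z,X],Y⟩. -/
def nablaG (a b c : ℝ) (x y : V) : V := fun k =>
  (1 / 2) * (ip (br a b c x y) (E k) - ip (br a b c y (E k)) x + ip (br a b c (E k) x) y)

/-- The torsion connection ∇⁺: ⟨∇⁺_X Y, Z⟩ = ⟨∇_X Y, Z⟩ + ½T(X,Y,Z). -/
def nablaP (a b c : ℝ) (x y : V) : V := fun k =>
  nablaG a b c x y k + (1 / 2) * T3 a b c x y (E k)

/-- Connection 1-forms ωⁱⱼ(X) = ⟨D_X E_j, E_i⟩ of a connection D. -/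
def conn1 (D : V → V → V) (i j : Fin 5) : V → ℝ := fun x => ip (D x (E j)) (E i)

/-- Curvature 2-forms Ωⁱⱼ = dσⁱⱼ + Σ_k σⁱ_k ∧ σᵏⱼ of connection 1-forms σ. -/
def curv (a b c : ℝ) (σ : Fin 5 → Fin 5 → V → ℝ) (i j : Fin 5) : V → V → ℝ :=
  fun x y => d1 a b c (σ i j) x y + ∑ k, (σ i k x * σ k j y - σ i k y * σ k j x)

/-- First Pontrjagin 4-form p₁ = (1/8π²) Σ_{1≤i<j≤5} Ωⁱⱼ∧Ωⁱⱼ. -/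
def pont (Ω : Fin 5 → Fin 5 → V → V → ℝ) : V → V → V → V → ℝ := fun x y z w =>
  (1 / (8 * π ^ 2)) * ∑ i, ∑ j, if i < j then w22 (Ω i j) (Ω i j) x y z w else 0

/-- The endomorphism ψ: ψE₁ = −E₂, ψE₂ = E₁, ψE₃ = −E₄, ψE₄ = E₃, ψE₅ = 0. -/
def psi (x : V) : V := ![x 1, -x 0, x 3, -x 2, 0]

/-- The coefficients of the connection 1-forms σⁱⱼ = (S i j)·e⁵ of the instanton
A_{λ,μ,τ}: σ¹₂ = −σ²₁ = −σ³₄ = σ⁴₃ = −λe⁵, σ¹₃ = −σ³₁ = σ²₄ = −σ⁴₂ = −μe⁵,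
σ¹₄ = −σ⁴₁ = −σ²₃ = σ³₂ = −τe⁵, all other σⁱⱼ = 0. -/
def S (lam mu tau : ℝ) : Fin 5 → Fin 5 → ℝ :=
  ![![0, -lam, -mu, -tau, 0],
    ![lam, 0, tau, -mu, 0],
    ![mu, -tau, 0, lam, 0],
    ![tau, mu, -lam, 0, 0],
    ![0, 0, 0, 0, 0]]

/-- The connection 1-forms of the instanton A_{λ,μ,τ}. -/
def sigmaA (lam mu tau : ℝ) (i j : Fin 5) : V → ℝ := fun x => S lam mu tau i j * e 4 x

/-! The torsion connection ∇⁺ is itself the instanton A_{a,b,c}. All connection 1-forms of an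
instanton A_{λ,μ,τ} are multiples of η = e⁵, so its curvature is Ωⁱⱼ = Sᵢⱼ dη and
p₁(A_{λ,μ,τ}) = (λ²+μ²+τ²)/(4π²) dη∧dη. On the other hand the algebra is 2-step nilpotent, so
d²η = 0 and dT = dη∧dη = −2(a²+b²+c²) e¹²³⁴. Hence
p₁(∇⁺) − p₁(A_{λ,μ,τ}) = (a²+b²+c²−λ²−μ²−τ²)/(4π²) dT, and 2π²α' inverts that factor. -/

lemma br_br_left (a b c : ℝ) (x y z : V) : br a b c (br a b c x y) z = 0 := by
  funext k; simp [br]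

lemma d3_w12_d1_self (a b c : ℝ) (α : V → ℝ) (hα : α 0 = 0) (x y z w : V) :
    d3 a b c (w12 α (d1 a b c α)) x y z w = w22 (d1 a b c α) (d1 a b c α) x y z w := by
  simp only [d3, w12, w22, d1, br_br_left, hα]
  ring

lemma w22_dEta_self (a b c : ℝ) (x y z w : V) :
    w22 (dEta a b c) (dEta a b c) x y z w = -2 * (a ^ 2 + b ^ 2 + c ^ 2) * e1234 x y z w := by
  simp only [dEta, d1, w22, br, e1234, w11, e, reduceIte]
  ring

lemma d3_T3 (a b c : ℝ) (x y z w : V) :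
    d3 a b c (T3 a b c) x y z w = w22 (dEta a b c) (dEta a b c) x y z w :=
  d3_w12_d1_self a b c (e 4) rfl x y z w

lemma curv_const_mul (a b c : ℝ) (k : Fin 5 → Fin 5 → ℝ) (α : V → ℝ) (i j : Fin 5) :
    curv a b c (fun i j x => k i j * α x) i j = fun x y => k i j * d1 a b c α x y := by
  funext x y
  simp only [curv, d1, Fin.sum_univ_five]
  ring

lemma pont_const_mul (k : Fin 5 → Fin 5 → ℝ) (β : V → V → ℝ) (x y z w : V) :
    pont (fun i j x y => k i j * β x y) x y z w
      = 1 / (8 * π ^ 2) * (∑ i, ∑ j, if i < j then k i j ^ 2 else 0) * w22 β β x y z w := by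
  have hw22 (i j : Fin 5) : w22 (fun x y => k i j * β x y) (fun x y => k i j * β x y) x y z w
      = k i j ^ 2 * w22 β β x y z w := by
    simp only [w22]; ring
  simp only [pont, hw22, Finset.sum_mul, ite_zero_mul, mul_assoc, Finset.mul_sum]

lemma sum_sq_S (lam mu tau : ℝ) :
    (∑ i, ∑ j, if i < j then S lam mu tau i j ^ 2 else 0) = 2 * (lam ^ 2 + mu ^ 2 + tau ^ 2) := by
  simp only [Fin.sum_univ_five, S, Matrix.cons_val_zero, Matrix.cons_val_one, Matrix.head_cons,
    Matrix.cons_val_two, Matrix.tail_cons, Matrix.cons_val_three, Matrix.cons_val_four,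
    Fin.isValue, Fin.reduceLT, reduceIte]
  ring

lemma pont_curv_sigmaA (a b c lam mu tau : ℝ) (x y z w : V) :
    pont (curv a b c (sigmaA lam mu tau)) x y z w
      = (lam ^ 2 + mu ^ 2 + tau ^ 2) / (4 * π ^ 2) * w22 (dEta a b c) (dEta a b c) x y z w := by
  have hΩ : curv a b c (sigmaA lam mu tau) = fun i j x y => S lam mu tau i j * dEta a b c x y := by
    funext i j
    exact curv_const_mul a b c (S lam mu tau) (e 4) i j
  rw [hΩ, pont_const_mul, sum_sq_S]
  ring

lemma conn1_nablaP (a b c : ℝ) : conn1 (nablaP a b c) = sigmaA a b c := by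
  funext i j x
  fin_cases i <;> fin_cases j <;>
  · simp only [conn1, nablaP, nablaG, T3, w12, dEta, d1, e, ip, Fin.sum_univ_five, br, E,
      Pi.single_apply, Fin.isValue, Fin.zero_eta, Fin.mk_one, Fin.reduceFinMk, Fin.reduceEq,
      reduceIte, sigmaA, S, Matrix.cons_val_zero, Matrix.cons_val_one, Matrix.head_cons,
      Matrix.cons_val_two, Matrix.tail_cons, Matrix.cons_val_three, Matrix.cons_val_four,
      mul_zero, mul_one, zero_mul, one_mul]
    ring

theorem anomaly_cancellation_plus_general (a b c lam mu tau : ℝ) :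
    (∀ x y z w : V,
      d3 a b c (T3 a b c) x y z w = -2 * (a ^ 2 + b ^ 2 + c ^ 2) * e1234 x y z w)
    ∧ (¬(lam = 0 ∧ mu = 0 ∧ tau = 0) →
       lam ^ 2 + mu ^ 2 + tau ^ 2 < a ^ 2 + b ^ 2 + c ^ 2 →
       0 < 2 * (a ^ 2 + b ^ 2 + c ^ 2 - (lam ^ 2 + mu ^ 2 + tau ^ 2))⁻¹
       ∧ ∀ x y z w : V,
           d3 a b c (T3 a b c) x y z w =
             2 * π ^ 2 * (2 * (a ^ 2 + b ^ 2 + c ^ 2 - (lam ^ 2 + mu ^ 2 + tau ^ 2))⁻¹)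
               * (pont (curv a b c (conn1 (nablaP a b c))) x y z w
                   - pont (curv a b c (sigmaA lam mu tau)) x y z w)) := by
  refine ⟨fun x y z w => (d3_T3 a b c x y z w).trans (w22_dEta_self a b c x y z w),
    fun _ hlt => ?_⟩
  have hgap : 0 < a ^ 2 + b ^ 2 + c ^ 2 - (lam ^ 2 + mu ^ 2 + tau ^ 2) := sub_pos.mpr hlt
  refine ⟨by positivity, fun x y z w => ?_⟩
  rw [d3_T3, conn1_nablaP, pont_curv_sigmaA, pont_curv_sigmaA]
  field_simp
  ring

/-- on 𝔥(2,1)_{a,b,c}, dT = −2(a²+b²+c²) e¹∧e²∧e³∧e⁴; moreover, if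
(λ,μ,τ) ≠ (0,0,0) and λ²+μ²+τ² < a²+b²+c², then with
α' = 2(a²+b²+c²−λ²−μ²−τ²)⁻¹ > 0 one has the anomaly cancellation identity
dT = 2π²α'(p₁(∇⁺) − p₁(A_{λ,μ,τ})). -/
theorem anomaly_cancellation_plus (a b c lam mu tau : ℝ)
    (h : a ^ 2 + b ^ 2 + c ^ 2 ≠ 0) :
    (∀ x y z w : V,
      d3 a b c (T3 a b c) x y z w = -2 * (a ^ 2 + b ^ 2 + c ^ 2) * e1234 x y z w)
    ∧ (¬(lam = 0 ∧ mu = 0 ∧ tau = 0) →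
       lam ^ 2 + mu ^ 2 + tau ^ 2 < a ^ 2 + b ^ 2 + c ^ 2 →
       0 < 2 * (a ^ 2 + b ^ 2 + c ^ 2 - (lam ^ 2 + mu ^ 2 + tau ^ 2))⁻¹
       ∧ ∀ x y z w : V,
           d3 a b c (T3 a b c) x y z w =
             2 * π ^ 2 * (2 * (a ^ 2 + b ^ 2 + c ^ 2 - (lam ^ 2 + mu ^ 2 + tau ^ 2))⁻¹)
               * (pont (curv a b c (conn1 (nablaP a b c))) x y z w
                   - pont (curv a b c (sigmaA lam mu tau)) x y z w)) :=
  anomaly_cancellation_plus_general a b c lam mu tau
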